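/- Fix an LF order ≼ on F and a lex column order ≤ on V, and let X ∈ F be nonempty. Suppose the set S = {Y ∈ F : left(X) ∉ Y and right(X) ∈ Y} is nonempty and let Y₀ be the ≼-least element of S. If |Y₀| ≥ |X| then Max(X) is defined and Max(X) = Y₀; if |Y₀| < |X| then Max(X) is undefined. Moreover, if S is empty then Max(X) is undefined. -/

import Mathlib

/-- Two sets `X` and `Y` overlap if `X ∩ Y ≠ ∅`, `X \ Y ≠ ∅` and `Y \ X ≠ ∅`. -/
def Overlaps {V : Type*} [DecidableEq V] (X Y : Finset V) : Prop :=
  (X ∩ Y).Nonempty ∧ (X \ Y).Nonempty ∧ (Y \ X).Nonempty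

/-!
Let `M` be the LF-least set among those of size at least `|X|` overlapping `X`. If `v < w` in `X`
with `v ∈ M` and `w ∉ M`, the lex column property yields an LF-earlier set `W` with `v ∉ W` and
`w ∈ W`; being at least as large as `M`, `W` would also overlap `X`, against the choice of `M`. So
`M ∩ X` is an up-set of `X`; as `M` overlaps `X`, it misses `left(X)` and contains `right(X)`.
Conversely the LF-least set missing `left(X)` and containing `right(X)` overlaps `X` as soon as it
is at least as large as `X`.
-/

open Finset

section

variable {ι V : Type*}

def IsLFOrder [LT ι] (S : ι → Finset V) : Prop :=
  ∀ A B, (S B).card < (S A).card → A < B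

def IsLexColumnOrder [LT ι] [LT V] (S : ι → Finset V) : Prop :=
  ∀ v w : V, v < w → ∀ Z, ¬(v ∈ S Z ↔ w ∈ S Z) →
    (∀ Z' < Z, (v ∈ S Z' ↔ w ∈ S Z')) → v ∉ S Z ∧ w ∈ S Z

/-- `IsMaxOverlap S X M` says that `M` is `Max(X)`. -/
def IsMaxOverlap [DecidableEq V] [LE ι] (S : ι → Finset V) (X M : ι) : Prop :=
  (S X).card ≤ (S M).card ∧ Overlaps (S M) (S X) ∧
    ∀ Z, (S X).card ≤ (S Z).card → Overlaps (S Z) (S X) → M ≤ Z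

theorem overlaps_of_card_le [DecidableEq V] {X Y : Finset V} (hcard : X.card ≤ Y.card)
    (hinter : (Y ∩ X).Nonempty) (hsdiff : (X \ Y).Nonempty) : Overlaps Y X := by
  refine ⟨hinter, ?_, hsdiff⟩
  rw [nonempty_iff_ne_empty, Ne, sdiff_eq_empty_iff_subset]
  intro hsub
  rw [eq_of_subset_of_card_le hsub hcard, sdiff_self] at hsdiff
  exact not_nonempty_empty hsdiff

variable {S : ι → Finset V}

theorem IsLFOrder.card_le_of_lt [LinearOrder ι] (hLF : IsLFOrder S) {A B : ι} (hAB : A < B) :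
    (S B).card ≤ (S A).card :=
  not_lt.mp fun hlt => (hLF B A hlt).asymm hAB

theorem IsLexColumnOrder.exists_lt_of_mem_of_notMem [LinearOrder ι] [WellFoundedLT ι] [LT V]
    (hlex : IsLexColumnOrder S) {v w : V} (hvw : v < w) {Z : ι} (hv : v ∈ S Z) (hw : w ∉ S Z) :
    ∃ W < Z, v ∉ S W ∧ w ∈ S W := by
  obtain ⟨W, hW, hmin⟩ :=
    wellFounded_lt.has_min {Z | ¬(v ∈ S Z ↔ w ∈ S Z)} ⟨Z, by simp [hv, hw]⟩
  obtain ⟨hvW, hwW⟩ := hlex v w hvw W hW fun Z' hZ' => not_not.mp fun hne => hmin Z' hne hZ'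
  have hWZ : W ≤ Z := not_lt.mp (hmin Z (by simp [hv, hw]))
  exact ⟨W, hWZ.lt_of_ne (by rintro rfl; exact hvW hv), hvW, hwW⟩

namespace IsMaxOverlap

variable [LinearOrder ι] [WellFoundedLT ι] [LinearOrder V] [DecidableEq V] {X M : ι}

theorem mem_of_le (hLF : IsLFOrder S) (hlex : IsLexColumnOrder S) (hM : IsMaxOverlap S X M)
    {v w : V} (hvX : v ∈ S X) (hwX : w ∈ S X) (hvw : v ≤ w) (hvM : v ∈ S M) : w ∈ S M := by
  obtain rfl | hlt := hvw.eq_or_lt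
  · exact hvM
  by_contra hwM
  obtain ⟨W, hWM, hvW, hwW⟩ := hlex.exists_lt_of_mem_of_notMem hlt hvM hwM
  have hcard : (S X).card ≤ (S W).card := hM.1.trans (hLF.card_le_of_lt hWM)
  have hover : Overlaps (S W) (S X) :=
    overlaps_of_card_le hcard ⟨w, mem_inter.2 ⟨hwW, hwX⟩⟩ ⟨v, mem_sdiff.2 ⟨hvX, hvW⟩⟩
  exact (hM.2.2 W hcard hover).not_gt hWM

theorem left_notMem (hLF : IsLFOrder S) (hlex : IsLexColumnOrder S) (hM : IsMaxOverlap S X M)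
    {l : V} (hl : l ∈ S X) (hlmin : ∀ u ∈ S X, l ≤ u) : l ∉ S M := by
  obtain ⟨b, hb⟩ := hM.2.1.2.2
  rw [mem_sdiff] at hb
  exact fun hlM => hb.2 (hM.mem_of_le hLF hlex hl hb.1 (hlmin b hb.1) hlM)

theorem right_mem (hLF : IsLFOrder S) (hlex : IsLexColumnOrder S) (hM : IsMaxOverlap S X M)
    {r : V} (hr : r ∈ S X) (hrmax : ∀ u ∈ S X, u ≤ r) : r ∈ S M := by
  obtain ⟨a, ha⟩ := hM.2.1.1
  rw [mem_inter] at ha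
  exact hM.mem_of_le hLF hlex ha.2 hr (hrmax a ha.2) ha.1

end IsMaxOverlap

theorem exists_isMaxOverlap [DecidableEq V] [LinearOrder ι] [WellFoundedLT ι] {X : ι}
    (h : ∃ M, (S X).card ≤ (S M).card ∧ Overlaps (S M) (S X)) : ∃ M, IsMaxOverlap S X M := by
  obtain ⟨M, ⟨hcard, hover⟩, hmin⟩ := wellFounded_lt.has_min _ h
  exact ⟨M, hcard, hover, fun Z hZc hZo => not_lt.mp (hmin Z ⟨hZc, hZo⟩)⟩

theorem exists_isMaxOverlap_left_notMem_right_mem [LinearOrder ι] [Finite ι] [LinearOrder V]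
    [DecidableEq V] (hLF : IsLFOrder S) (hlex : IsLexColumnOrder S) {X : ι} {l r : V}
    (hl : l ∈ S X) (hlmin : ∀ u ∈ S X, l ≤ u) (hr : r ∈ S X) (hrmax : ∀ u ∈ S X, u ≤ r)
    (h : ∃ M, (S X).card ≤ (S M).card ∧ Overlaps (S M) (S X)) :
    ∃ M, IsMaxOverlap S X M ∧ l ∉ S M ∧ r ∈ S M := by
  obtain ⟨M, hM⟩ := exists_isMaxOverlap h
  exact ⟨M, hM, hM.left_notMem hLF hlex hl hlmin, hM.right_mem hLF hlex hr hrmax⟩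

end

theorem stmt10_general {V : Type*} [DecidableEq V]
    (F : Finset (Finset V))
    (lo : LinearOrder {X : Finset V // X ∈ F})
    (hLF : ∀ A B : {X : Finset V // X ∈ F},
      (B : Finset V).card < (A : Finset V).card → lo.lt A B)
    (lv : LinearOrder V)
    (hlex : ∀ v w : V, lv.lt v w →
      ∀ Z : {X : Finset V // X ∈ F},
        ¬(v ∈ (Z : Finset V) ↔ w ∈ (Z : Finset V)) →
        (∀ Z' : {X : Finset V // X ∈ F}, lo.lt Z' Z →
          (v ∈ (Z' : Finset V) ↔ w ∈ (Z' : Finset V))) →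
        v ∉ (Z : Finset V) ∧ w ∈ (Z : Finset V))
    (X : {X : Finset V // X ∈ F})
    (l r : V)
    (hl : l ∈ (X : Finset V) ∧ ∀ u ∈ (X : Finset V), lv.le l u)
    (hr : r ∈ (X : Finset V) ∧ ∀ u ∈ (X : Finset V), lv.le u r) :
    (∀ Y₀ : {X : Finset V // X ∈ F},
      l ∉ (Y₀ : Finset V) → r ∈ (Y₀ : Finset V) →
      (∀ Z : {X : Finset V // X ∈ F},
        l ∉ (Z : Finset V) → r ∈ (Z : Finset V) → lo.le Y₀ Z) →
      (((X : Finset V).card ≤ (Y₀ : Finset V).card →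
          Overlaps (Y₀ : Finset V) (X : Finset V) ∧
          (∀ Z : {X : Finset V // X ∈ F},
            (X : Finset V).card ≤ (Z : Finset V).card →
            Overlaps (Z : Finset V) (X : Finset V) → lo.le Y₀ Z)) ∧
        ((Y₀ : Finset V).card < (X : Finset V).card →
          ¬∃ M : {X : Finset V // X ∈ F},
            (X : Finset V).card ≤ (M : Finset V).card ∧
            Overlaps (M : Finset V) (X : Finset V)))) ∧
    ((¬∃ Y : {X : Finset V // X ∈ F},
        l ∉ (Y : Finset V) ∧ r ∈ (Y : Finset V)) →
      ¬∃ M : {X : Finset V // X ∈ F},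
        (X : Finset V).card ≤ (M : Finset V).card ∧
        Overlaps (M : Finset V) (X : Finset V)) := by
  -- The subtype also inherits the inclusion order of `Finset V`, which instance search would pick
  -- for generic order lemmas; hence `lo.le_trans` and `lo.lt_iff_le_not_ge` below.
  let _ := lo
  let _ := lv
  obtain ⟨hlX, hlmin⟩ := hl
  obtain ⟨hrX, hrmax⟩ := hr
  have hmax := exists_isMaxOverlap_left_notMem_right_mem hLF hlex hlX hlmin hrX hrmax
  refine ⟨fun Y₀ hlY hrY hY₀ => ⟨fun hc => ⟨?_, fun Z hZc hZo => ?_⟩, fun hc hM => ?_⟩,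
    fun hS hM => ?_⟩
  · exact overlaps_of_card_le hc ⟨r, mem_inter.2 ⟨hrY, hrX⟩⟩ ⟨l, mem_sdiff.2 ⟨hlX, hlY⟩⟩
  · obtain ⟨M, hM, hlM, hrM⟩ := hmax ⟨Z, hZc, hZo⟩
    exact lo.le_trans _ _ _ (hY₀ M hlM hrM) (hM.2.2 Z hZc hZo)
  · obtain ⟨M, hM, hlM, hrM⟩ := hmax hM
    exact ((lo.lt_iff_le_not_ge _ _).1 (hLF M Y₀ (hc.trans_le hM.1))).2 (hY₀ M hlM hrM)
  · obtain ⟨M, -, hM⟩ := hmax hM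
    exact hS ⟨M, hM⟩

/-- Fix an LF order `lo` on `F` and a lex column order `lv` on `V`, and let
`X ∈ F` be nonempty. Consider `S = {Y ∈ F : left(X) ∉ Y ∧ right(X) ∈ Y}`.
If `S` is nonempty with `≼`-least element `Y₀`, then: if `|Y₀| ≥ |X|`, `Max(X)`
is defined and equals `Y₀`; if `|Y₀| < |X|`, `Max(X)` is undefined.
Moreover if `S` is empty then `Max(X)` is undefined. -/
theorem stmt10 {V : Type*} [Fintype V] [DecidableEq V]
    (F : Finset (Finset V))
    (lo : LinearOrder {X : Finset V // X ∈ F})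
    (hLF : ∀ A B : {X : Finset V // X ∈ F},
      (B : Finset V).card < (A : Finset V).card → lo.lt A B)
    (lv : LinearOrder V)
    (hlex : ∀ v w : V, lv.lt v w →
      ∀ Z : {X : Finset V // X ∈ F},
        ¬(v ∈ (Z : Finset V) ↔ w ∈ (Z : Finset V)) →
        (∀ Z' : {X : Finset V // X ∈ F}, lo.lt Z' Z →
          (v ∈ (Z' : Finset V) ↔ w ∈ (Z' : Finset V))) →
        v ∉ (Z : Finset V) ∧ w ∈ (Z : Finset V))
    (X : {X : Finset V // X ∈ F}) (hXne : (X : Finset V).Nonempty)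
    (l r : V)
    (hl : l ∈ (X : Finset V) ∧ ∀ u ∈ (X : Finset V), lv.le l u)
    (hr : r ∈ (X : Finset V) ∧ ∀ u ∈ (X : Finset V), lv.le u r) :
    (∀ Y₀ : {X : Finset V // X ∈ F},
      l ∉ (Y₀ : Finset V) → r ∈ (Y₀ : Finset V) →
      (∀ Z : {X : Finset V // X ∈ F},
        l ∉ (Z : Finset V) → r ∈ (Z : Finset V) → lo.le Y₀ Z) →
      (((X : Finset V).card ≤ (Y₀ : Finset V).card →
          Overlaps (Y₀ : Finset V) (X : Finset V) ∧
          (∀ Z : {X : Finset V // X ∈ F},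
            (X : Finset V).card ≤ (Z : Finset V).card →
            Overlaps (Z : Finset V) (X : Finset V) → lo.le Y₀ Z)) ∧
        ((Y₀ : Finset V).card < (X : Finset V).card →
          ¬∃ M : {X : Finset V // X ∈ F},
            (X : Finset V).card ≤ (M : Finset V).card ∧
            Overlaps (M : Finset V) (X : Finset V)))) ∧
    ((¬∃ Y : {X : Finset V // X ∈ F},
        l ∉ (Y : Finset V) ∧ r ∈ (Y : Finset V)) →
      ¬∃ M : {X : Finset V // X ∈ F},
        (X : Finset V).card ≤ (M : Finset V).card ∧
        Overlaps (M : Finset V) (X : Finset V)) :=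
  stmt10_general F lo hLF lv hlex X l r hl hr
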